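/- For λ > 0, λ̂ > 0 with λ̂ ≠ r and λ̂ ≠ αr, r > 0, α > 1, t > 0: λ²·∫₀ᵗ∫₀^{t−v}( e^{−rv}·e^{−αr(u+v)} + e^{−r(u+v)}·e^{−αru} )·(1 − e^{−λ̂u}) du dv = λ²(1−e^{−rt})(1−e^{−αrt})/(αr²) + λ²e^{−(αr+λ̂)t}(1−e^{−(r−λ̂)t})/((r−λ̂)(αr+λ̂)) + λ²e^{−rt}(1−e^{−(αr+λ̂)t})/((αr+λ̂)(r+αr+λ̂)) − λ²(1−e^{−(α+1)rt})/((α+1)r(αr+λ̂)) − λ²(1−e^{−rt})/(r(r+αr+λ̂)). -/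

import Mathlib

/-!
Expanding the product, the integrand is a sum of four terms `± e^{m v} e^{c u}`. Over the
triangle `u, v ≥ 0, u + v ≤ t` each such term integrates in closed form: the inner integral is
`e^{m v} (e^{c (t - v)} - 1) / c`, and since `e^{c t} e^{(m - c) v} = e^{m v} e^{c (t - v)}` the outer
one is `((e^{m t} - e^{c t}) / (m - c) - (e^{m t} - 1) / m) / c` whenever `m`, `c`, `m - c ≠ 0`.
For the four terms the gaps `m - c` are `-r`, `λ̂ - r`, `α r` and `α r + λ̂`; what is left is
rational algebra in `e^{-r t}`, `e^{-α r t}` and `e^{-λ̂ t}`.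
-/

open Real

theorem integral_exp_mul {c : ℝ} (hc : c ≠ 0) (a b : ℝ) :
    ∫ x in a..b, exp (c * x) = (exp (c * b) - exp (c * a)) / c := by
  rw [intervalIntegral.integral_comp_mul_left (fun x => exp x) hc, integral_exp, smul_eq_mul,
    inv_mul_eq_div]

theorem exp_mul_mul_exp_sub_mul (m c t v : ℝ) :
    exp (c * t) * exp ((m - c) * v) = exp (m * v) * exp (c * (t - v)) := by
  rw [← exp_add, ← exp_add]; ring_nf

theorem integral_exp_mul_mul_exp_mul_sub_sub_one {m c : ℝ} (hm : m ≠ 0) (hmc : m ≠ c) (t : ℝ) :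
    ∫ v in (0:ℝ)..t, exp (m * v) * ((exp (c * (t - v)) - 1) / c)
      = ((exp (m * t) - exp (c * t)) / (m - c) - (exp (m * t) - 1) / m) / c := by
  have hsplit : ∀ v, exp (m * v) * ((exp (c * (t - v)) - 1) / c)
      = (exp (c * t) * exp ((m - c) * v) - exp (m * v)) / c := fun v => by
    rw [exp_mul_mul_exp_sub_mul]; ring
  simp_rw [hsplit]
  rw [intervalIntegral.integral_div,
    intervalIntegral.integral_sub ((by fun_prop : Continuous _).intervalIntegrable _ _)
      ((by fun_prop : Continuous _).intervalIntegrable _ _),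
    intervalIntegral.integral_const_mul, integral_exp_mul (sub_ne_zero.2 hmc), integral_exp_mul hm,
    mul_div_assoc', mul_sub, exp_mul_mul_exp_sub_mul, sub_self]
  simp only [mul_zero, exp_zero, mul_one]

theorem integral_integral_sum_mul_exp_mul_exp_mul {ι : Type*} (s : Finset ι) (k m c : ι → ℝ)
    (hm : ∀ i ∈ s, m i ≠ 0) (hc : ∀ i ∈ s, c i ≠ 0) (hmc : ∀ i ∈ s, m i ≠ c i) (t : ℝ) :
    ∫ v in (0:ℝ)..t, ∫ u in (0:ℝ)..(t - v), ∑ i ∈ s, k i * (exp (m i * v) * exp (c i * u))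
      = ∑ i ∈ s, k i *
          (((exp (m i * t) - exp (c i * t)) / (m i - c i) - (exp (m i * t) - 1) / m i) / c i) := by
  have hinner : ∀ v, ∫ u in (0:ℝ)..(t - v), ∑ i ∈ s, k i * (exp (m i * v) * exp (c i * u))
      = ∑ i ∈ s, k i * (exp (m i * v) * ((exp (c i * (t - v)) - 1) / c i)) := fun v => by
    rw [intervalIntegral.integral_finsetSum fun i _ =>
      (by fun_prop : Continuous _).intervalIntegrable _ _]
    refine Finset.sum_congr rfl fun i hi => ?_
    rw [intervalIntegral.integral_const_mul, intervalIntegral.integral_const_mul,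
      integral_exp_mul (hc i hi), mul_zero, exp_zero]
  simp_rw [hinner]
  rw [intervalIntegral.integral_finsetSum fun i _ =>
    (by fun_prop : Continuous _).intervalIntegrable _ _]
  refine Finset.sum_congr rfl fun i hi => ?_
  rw [intervalIntegral.integral_const_mul,
    integral_exp_mul_mul_exp_mul_sub_sub_one (hm i hi) (hmc i hi)]

namespace ByClaim

def sign : Fin 4 → ℝ := ![1, -1, 1, -1]

def vRate (r α : ℝ) : Fin 4 → ℝ := ![-(α * r + r), -(α * r + r), -r, -r]

def uRate (r α lamhat : ℝ) : Fin 4 → ℝ :=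
  ![-(α * r), -(α * r + lamhat), -(α * r + r), -(α * r + r + lamhat)]

variable {r α lamhat : ℝ}

theorem integrand_eq_sum (u v : ℝ) :
    (exp (-r * v) * exp (-α * r * (u + v)) + exp (-r * (u + v)) * exp (-α * r * u))
        * (1 - exp (-lamhat * u))
      = ∑ i, sign i * (exp (vRate r α i * v) * exp (uRate r α lamhat i * u)) := by
  simp only [Fin.sum_univ_four, sign, vRate, uRate, Fin.isValue, Matrix.cons_val_zero,
    Matrix.cons_val_one, Matrix.cons_val, add_mul, mul_sub, mul_one, one_mul, neg_one_mul,
    ← exp_add]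
  ring_nf

theorem vRate_ne_zero (hr : 0 < r) (hα : 0 < α) (i : Fin 4) : vRate r α i ≠ 0 := by
  have hαr : 0 < α * r := mul_pos hα hr
  fin_cases i <;> simp only [vRate, Fin.isValue, Fin.zero_eta, Fin.mk_one, Fin.reduceFinMk,
    Matrix.cons_val_zero, Matrix.cons_val_one, Matrix.cons_val] <;> intro h <;> linarith

theorem uRate_ne_zero (hr : 0 < r) (hα : 0 < α) (hlamhat : 0 < lamhat) (i : Fin 4) :
    uRate r α lamhat i ≠ 0 := by
  have hαr : 0 < α * r := mul_pos hα hr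
  fin_cases i <;> simp only [uRate, Fin.isValue, Fin.zero_eta, Fin.mk_one, Fin.reduceFinMk,
    Matrix.cons_val_zero, Matrix.cons_val_one, Matrix.cons_val] <;> intro h <;> linarith

theorem vRate_ne_uRate (hr : 0 < r) (hα : 0 < α) (hlamhat : 0 < lamhat) (hne : lamhat ≠ r)
    (i : Fin 4) : vRate r α i ≠ uRate r α lamhat i := by
  have hαr : 0 < α * r := mul_pos hα hr
  rcases hne.lt_or_gt with hlt | hlt <;>
    fin_cases i <;> simp only [vRate, uRate, Fin.isValue, Fin.zero_eta, Fin.mk_one,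
      Fin.reduceFinMk, Matrix.cons_val_zero, Matrix.cons_val_one, Matrix.cons_val] <;>
    intro h <;> linarith

theorem sum_triangle_eq (hr : 0 < r) (hα : 0 < α) (hlamhat : 0 < lamhat) (hne : lamhat ≠ r)
    (t : ℝ) :
    ∑ i, sign i * (((exp (vRate r α i * t) - exp (uRate r α lamhat i * t))
        / (vRate r α i - uRate r α lamhat i) - (exp (vRate r α i * t) - 1) / vRate r α i)
        / uRate r α lamhat i)
      = (1 - exp (-r * t)) * (1 - exp (-α * r * t)) / (α * r ^ 2)
        + exp (-(α * r + lamhat) * t) * (1 - exp (-(r - lamhat) * t))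
            / ((r - lamhat) * (α * r + lamhat))
        + exp (-r * t) * (1 - exp (-(α * r + lamhat) * t))
            / ((α * r + lamhat) * (r + α * r + lamhat))
        - (1 - exp (-(α + 1) * r * t)) / ((α + 1) * r * (α * r + lamhat))
        - (1 - exp (-r * t)) / (r * (r + α * r + lamhat)) := by
  have hrl : r - lamhat ≠ 0 := sub_ne_zero.2 hne.symm
  simp only [Fin.sum_univ_four, sign, vRate, uRate, Fin.isValue, Matrix.cons_val_zero,
    Matrix.cons_val_one, Matrix.cons_val]
  rw [show -(α * r + r) - -(α * r) = -r by ring,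
    show -(α * r + r) - -(α * r + lamhat) = -(r - lamhat) by ring,
    show -r - -(α * r + r) = α * r by ring,
    show -r - -(α * r + r + lamhat) = α * r + lamhat by ring]
  have e1 : exp (-(α * r + r) * t) = exp (-α * r * t) * exp (-r * t) := by
    rw [← exp_add]; ring_nf
  have e2 : exp (-(α * r + lamhat) * t) = exp (-α * r * t) * exp (-lamhat * t) := by
    rw [← exp_add]; ring_nf
  have e3 : exp (-(α * r + r + lamhat) * t)
      = exp (-α * r * t) * exp (-r * t) * exp (-lamhat * t) := by
    rw [← exp_add, ← exp_add]; ring_nf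
  have e4 : exp (-(r - lamhat) * t) = exp (-r * t) / exp (-lamhat * t) := by
    rw [← exp_sub]; ring_nf
  have e5 : exp (-(α + 1) * r * t) = exp (-α * r * t) * exp (-r * t) := by
    rw [← exp_add]; ring_nf
  have e6 : exp (-(α * r) * t) = exp (-α * r * t) := by ring_nf
  rw [e1, e2, e3, e4, e5, e6]
  field_simp
  ring

end ByClaim

open ByClaim in
theorem stmt_12_general (lam lamhat r α t : ℝ) (hlamhat : 0 < lamhat)
    (hr : 0 < r) (hα : 1 < α) (hne1 : lamhat ≠ r) :
    lam ^ 2 * ∫ v in (0:ℝ)..t, ∫ u in (0:ℝ)..(t - v),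
        (Real.exp (-r * v) * Real.exp (-α * r * (u + v)) +
         Real.exp (-r * (u + v)) * Real.exp (-α * r * u)) * (1 - Real.exp (-lamhat * u))
      = lam ^ 2 * (1 - Real.exp (-r * t)) * (1 - Real.exp (-α * r * t)) / (α * r ^ 2)
        + lam ^ 2 * Real.exp (-(α * r + lamhat) * t) * (1 - Real.exp (-(r - lamhat) * t))
            / ((r - lamhat) * (α * r + lamhat))
        + lam ^ 2 * Real.exp (-r * t) * (1 - Real.exp (-(α * r + lamhat) * t))
            / ((α * r + lamhat) * (r + α * r + lamhat))
        - lam ^ 2 * (1 - Real.exp (-(α + 1) * r * t)) / ((α + 1) * r * (α * r + lamhat))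
        - lam ^ 2 * (1 - Real.exp (-r * t)) / (r * (r + α * r + lamhat)) := by
  have hα0 : 0 < α := zero_lt_one.trans hα
  simp_rw [integrand_eq_sum,
    integral_integral_sum_mul_exp_mul_exp_mul _ _ _ _ (fun i _ => vRate_ne_zero hr hα0 i)
      (fun i _ => uRate_ne_zero hr hα0 hlamhat i) (fun i _ => vRate_ne_uRate hr hα0 hlamhat hne1 i) t,
    sum_triangle_eq hr hα0 hlamhat hne1 t]
  ring

theorem stmt_12 (lam lamhat r α t : ℝ) (hlam : 0 < lam) (hlamhat : 0 < lamhat)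
    (hr : 0 < r) (hα : 1 < α) (hne1 : lamhat ≠ r) (hne2 : lamhat ≠ α * r) (ht : 0 < t) :
    lam ^ 2 * ∫ v in (0:ℝ)..t, ∫ u in (0:ℝ)..(t - v),
        (Real.exp (-r * v) * Real.exp (-α * r * (u + v)) +
         Real.exp (-r * (u + v)) * Real.exp (-α * r * u)) * (1 - Real.exp (-lamhat * u))
      = lam ^ 2 * (1 - Real.exp (-r * t)) * (1 - Real.exp (-α * r * t)) / (α * r ^ 2)
        + lam ^ 2 * Real.exp (-(α * r + lamhat) * t) * (1 - Real.exp (-(r - lamhat) * t))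
            / ((r - lamhat) * (α * r + lamhat))
        + lam ^ 2 * Real.exp (-r * t) * (1 - Real.exp (-(α * r + lamhat) * t))
            / ((α * r + lamhat) * (r + α * r + lamhat))
        - lam ^ 2 * (1 - Real.exp (-(α + 1) * r * t)) / ((α + 1) * r * (α * r + lamhat))
        - lam ^ 2 * (1 - Real.exp (-r * t)) / (r * (r + α * r + lamhat)) :=
  stmt_12_general lam lamhat r α t hlamhat hr hα hne1
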